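/- arXiv:0710.1844 — 2 statements merged into one kernel-verified Lean document; each statement's English description precedes it below -/
import Mathlib

section
/- Let n ≥ 2 and R > 0, and let Ω be the open ball of radius R centered at the origin in EuclideanSpace ℝ (Fin n). There exists a constant C > 0, depending only on n and R, such that for every continuous H : closure(Ω) → ℝ with sup_{closure(Ω)} |H| ≤ (n−1)/(nR) and every u continuous on closure(Ω) and twice continuously differentiable on Ω satisfying Σᵢ ∂ᵢ(∂ᵢu/√(1 + ‖∇u‖²)) = n·H(x) on Ω, one has sup_{closure(Ω)} |u| ≤ C + sup_{∂Ω} |u|. -/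
noncomputable def meanCurvOp (n : ℕ) (u : EuclideanSpace ℝ (Fin n) → ℝ)
    (x : EuclideanSpace ℝ (Fin n)) : ℝ :=
  ∑ i : Fin n,
    fderiv ℝ
      (fun y => fderiv ℝ u y (EuclideanSpace.single i (1 : ℝ)) /
        Real.sqrt (1 + ‖gradient u y‖ ^ 2))
      x (EuclideanSpace.single i (1 : ℝ))

/-!
The upper hemisphere `φ` of radius `R` over the ball, raised so that it lies above `u` on the
boundary sphere, has `Q[φ] = -n/R`, whereas `|Q[u]| = n |H| ≤ (n - 1)/R < n/R`. Writing
`Q[u] = tr((I - p ⊗ p / W²) D²u) / W` with `p = ∇u`, `W² = 1 + |p|²`, the coefficient matrix is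
positive definite; at an interior maximum of `u - φ` the gradients agree and `D²(u - φ) ≤ 0`,
which would force `Q[u] ≤ Q[φ]`. So `u - φ` is maximal on the boundary, giving
`u ≤ sup_{∂Ω} |u| + R`; applying this to `-u` gives the estimate with `C = R`.
-/

open Metric Set Filter
open scoped RealInnerProductSpace Topology

section TraceForm

variable {F : Type*} [NormedAddCommGroup F] [InnerProductSpace ℝ F]

-- `tr((I - p ⊗ p / (1 + |p|²)) S)`, the principal part of `Q` at gradient `p` and Hessian `S`.
noncomputable def meanCurvTrace [FiniteDimensional ℝ F] (p : F) (S : F →L[ℝ] F) : ℝ :=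
  LinearMap.trace ℝ F S - ⟪p, S p⟫ / (1 + ‖p‖ ^ 2)

lemma OrthonormalBasis.sum_inner_mul_inner_apply {ι : Type*} [Fintype ι]
    (b : OrthonormalBasis ι ℝ F) (S : F →L[ℝ] F) (p : F) :
    ∑ k, ⟪b k, p⟫ * ⟪p, S (b k)⟫ = ⟪p, S p⟫ := by
  have := congrArg (fun y => ⟪p, S y⟫) (b.sum_repr' p)
  simpa [map_sum, inner_sum, real_inner_smul_right] using this

lemma OrthonormalBasis.sum_inner_sub_smul_apply {ι : Type*} [Fintype ι]
    (b : OrthonormalBasis ι ℝ F) (S : F →L[ℝ] F) (p : F) (c : ℝ) :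
    ∑ k, ⟪b k - (c * ⟪b k, p⟫) • p, S (b k - (c * ⟪b k, p⟫) • p)⟫ =
      LinearMap.trace ℝ F S - (2 * c - c ^ 2 * ‖p‖ ^ 2) * ⟪p, S p⟫ := by
  have h₁ : ∑ k, ⟪b k, p⟫ * ⟪b k, S p⟫ = ⟪p, S p⟫ := by
    simpa only [real_inner_comm p] using b.sum_inner_mul_inner p (S p)
  have h₂ := b.sum_inner_mul_inner_apply S p
  have h₃ := b.sum_sq_inner_right p
  have hk : ∀ k, ⟪b k - (c * ⟪b k, p⟫) • p, S (b k - (c * ⟪b k, p⟫) • p)⟫ =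
      ⟪b k, S (b k)⟫ - c * (⟪b k, p⟫ * ⟪b k, S p⟫) - c * (⟪b k, p⟫ * ⟪p, S (b k)⟫) +
        c ^ 2 * ⟪p, S p⟫ * ⟪b k, p⟫ ^ 2 := fun k => by
    simp only [map_sub, map_smul, inner_sub_left, inner_sub_right, real_inner_smul_left,
      real_inner_smul_right]
    ring
  simp only [hk, Finset.sum_add_distrib, Finset.sum_sub_distrib, ← Finset.mul_sum, h₁, h₂, h₃,
    LinearMap.trace_eq_sum_inner _ b, ContinuousLinearMap.coe_coe]
  ring

variable [FiniteDimensional ℝ F]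

lemma meanCurvTrace_sub (p : F) (S T : F →L[ℝ] F) :
    meanCurvTrace p (S - T) = meanCurvTrace p S - meanCurvTrace p T := by
  simp only [meanCurvTrace, ContinuousLinearMap.toLinearMap_sub, map_sub,
    sub_apply, inner_sub_right]
  ring

lemma meanCurvTrace_nonpos (p : F) {S : F →L[ℝ] F} (hS : ∀ v, ⟪v, S v⟫ ≤ 0) :
    meanCurvTrace p S ≤ 0 := by
  set W := √(1 + ‖p‖ ^ 2)
  have hW : 0 < W := by positivity
  have hW2 : W ^ 2 = 1 + ‖p‖ ^ 2 := Real.sq_sqrt (by positivity)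
  -- sum `⟪w, S w⟫ ≤ 0` over `w = b k - c ⟪b k, p⟫ • p`, with `c` tuned so that the
  -- coefficient of `⟪p, S p⟫` becomes `1 / W²`
  have hc : 2 * (1 / (W * (W + 1))) - (1 / (W * (W + 1))) ^ 2 * ‖p‖ ^ 2 =
      1 / (1 + ‖p‖ ^ 2) := by
    rw [← hW2]; field_simp; nlinarith
  have key := (stdOrthonormalBasis ℝ F).sum_inner_sub_smul_apply S p (1 / (W * (W + 1)))
  rw [hc] at key
  have : LinearMap.trace ℝ F S - 1 / (1 + ‖p‖ ^ 2) * ⟪p, S p⟫ ≤ 0 :=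
    key ▸ Finset.sum_nonpos fun k _ => hS _
  rw [meanCurvTrace]
  linarith [show ⟪p, S p⟫ / (1 + ‖p‖ ^ 2) = 1 / (1 + ‖p‖ ^ 2) * ⟪p, S p⟫ by ring]

end TraceForm

lemma IsLocalMax.nonpos_of_hasDerivAt_deriv {f f' : ℝ → ℝ} {a c : ℝ} (h : IsLocalMax f a)
    (hf : ∀ᶠ t in 𝓝 a, HasDerivAt f (f' t) t) (hf' : HasDerivAt f' c a) : c ≤ 0 := by
  by_contra! hc
  have hf'a : f' a = 0 := h.hasDerivAt_eq_zero hf.self_of_nhds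
  have hpos : ∀ᶠ t in 𝓝[>] a, 0 < f' t := by
    filter_upwards [nhdsGT_le_nhdsNE a ((hasDerivAt_iff_tendsto_slope.mp hf').eventually
      (eventually_gt_nhds hc)), self_mem_nhdsWithin] with t ht hat
    exact pos_of_slope_pos hat ht hf'a
  obtain ⟨b, hab, hb⟩ := mem_nhdsGT_iff_exists_Ioc_subset.mp
    (hpos.and ((hf.filter_mono nhdsWithin_le_nhds).and (h.filter_mono nhdsWithin_le_nhds)))
  have hab : a < b := hab
  have hcont : ContinuousOn f (Icc a b) := fun t ht =>
    (ht.1.eq_or_lt.elim (fun hat => hat ▸ hf.self_of_nhds)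
      fun hat => (hb ⟨hat, ht.2⟩).2.1).continuousAt.continuousWithinAt
  obtain ⟨ξ, hξ, hslope⟩ := exists_hasDerivAt_eq_slope f f' hab hcont
    fun t ht => (hb ⟨ht.1, ht.2.le⟩).2.1
  have hfb : f b ≤ f a := (hb ⟨hab, le_rfl⟩).2.2
  have : 0 < (f b - f a) / (b - a) := hslope ▸ (hb ⟨hξ.1, hξ.2.le⟩).1
  linarith [(div_pos_iff_of_pos_right (sub_pos.mpr hab)).mp this]

section Calculus

variable {F : Type*} [NormedAddCommGroup F] [InnerProductSpace ℝ F]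

lemma hasFDerivAt_inner_div_sqrt_one_add_norm_sq (w p : F) :
    HasFDerivAt (fun q : F => ⟪w, q⟫ / √(1 + ‖q‖ ^ 2))
      ((√(1 + ‖p‖ ^ 2))⁻¹ • innerSL ℝ w - (⟪w, p⟫ / √(1 + ‖p‖ ^ 2) ^ 3) • innerSL ℝ p) p := by
  have hz : 0 < 1 + ‖p‖ ^ 2 := by positivity
  have hW : 0 < √(1 + ‖p‖ ^ 2) := Real.sqrt_pos.mpr hz
  have hW2 : √(1 + ‖p‖ ^ 2) ^ 2 = 1 + ‖p‖ ^ 2 := Real.sq_sqrt hz.le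
  have hsqrt := ((hasFDerivAt_id p).norm_sq.const_add 1).sqrt hz.ne'
  have hinv := (hasDerivAt_inv hW.ne').comp_hasFDerivAt p hsqrt
  simp only [div_eq_mul_inv]
  refine ((innerSL ℝ w).hasFDerivAt.mul hinv).congr_fderiv ?_
  ext v
  simp only [Function.comp_apply, add_apply, sub_apply,
    smul_apply, ContinuousLinearMap.comp_apply, innerSL_apply_apply,
    smul_eq_mul, nsmul_eq_mul, id_eq, ContinuousLinearMap.coe_id']
  field_simp
  rw [hW2]
  ring

variable [CompleteSpace F]

lemma ContDiffAt.differentiableAt_gradient {g : F → ℝ} {x : F} (hg : ContDiffAt ℝ 2 g x) :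
    DifferentiableAt ℝ (gradient g) x :=
  (InnerProductSpace.toDual ℝ F).symm.toContinuousLinearEquiv.differentiableAt.comp x
    ((hg.fderiv_right (m := 1) (by norm_num)).differentiableAt (by norm_num))

lemma IsLocalMax.inner_fderiv_gradient_nonpos {g : F → ℝ} {x : F} (h : IsLocalMax g x)
    (hg : ContDiffAt ℝ 2 g x) (v : F) : ⟪v, fderiv ℝ (gradient g) x v⟫ ≤ 0 := by
  have hline : ∀ t : ℝ, HasDerivAt (fun s : ℝ => x + s • v) v t := fun t => by
    simpa using ((hasDerivAt_id t).smul_const v).const_add x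
  have hline0 : Tendsto (fun s : ℝ => x + s • v) (𝓝 0) (𝓝 x) := by
    simpa using (hline 0).continuousAt.tendsto
  have hmax : IsLocalMax (fun t : ℝ => g (x + t • v)) 0 :=
    IsLocalMax.comp_continuous (g := fun s : ℝ => x + s • v) (by simpa using h)
      (hline 0).continuousAt
  have hdiff : ∀ᶠ t in 𝓝 (0 : ℝ), DifferentiableAt ℝ g (x + t • v) :=
    hline0.eventually ((hg.eventually (by simp)).mono fun y hy => hy.differentiableAt (by simp))
  refine hmax.nonpos_of_hasDerivAt_deriv (f' := fun t => ⟪v, gradient g (x + t • v)⟫) ?_ ?_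
  · filter_upwards [hdiff] with t ht
    rw [real_inner_comm, inner_gradient_left]
    exact ht.hasFDerivAt.comp_hasDerivAt t (hline t)
  · have hG : HasFDerivAt (gradient g) (fderiv ℝ (gradient g) x) (x + (0 : ℝ) • v) := by
      simpa using hg.differentiableAt_gradient.hasFDerivAt
    exact ((innerSL ℝ v).hasFDerivAt.comp _ hG).comp_hasDerivAt 0 (hline 0)

end Calculus

section Hemisphere

variable {F : Type*} [NormedAddCommGroup F] {a y : F} {R M : ℝ}

lemma sq_sub_norm_sub_sq_pos_of_mem_ball (hy : y ∈ ball a R) : 0 < R ^ 2 - ‖y - a‖ ^ 2 := by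
  rw [mem_ball_iff_norm] at hy
  nlinarith [norm_nonneg (y - a)]

noncomputable def hemisphere (a : F) (R M : ℝ) (y : F) : ℝ := M + √(R ^ 2 - ‖y - a‖ ^ 2)

variable [InnerProductSpace ℝ F]

lemma contDiffAt_hemisphere (hy : y ∈ ball a R) : ContDiffAt ℝ 2 (hemisphere a R M) y :=
  contDiffAt_const.add ((contDiffAt_const.sub ((contDiffAt_id.sub contDiffAt_const).norm_sq ℝ)).sqrt
    (sq_sub_norm_sub_sq_pos_of_mem_ball hy).ne')

lemma hasFDerivAt_hemisphere (hy : y ∈ ball a R) :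
    HasFDerivAt (hemisphere a R M) (-(√(R ^ 2 - ‖y - a‖ ^ 2))⁻¹ • innerSL ℝ (y - a)) y := by
  have hs := sq_sub_norm_sub_sq_pos_of_mem_ball hy
  refine ((((hasFDerivAt_id y).sub_const a).norm_sq.const_sub (R ^ 2)).sqrt hs.ne'
    |>.const_add M).congr_fderiv ?_
  ext v
  simp only [neg_apply, smul_apply, ContinuousLinearMap.comp_apply, innerSL_apply_apply,
    smul_eq_mul, nsmul_eq_mul, id_eq, ContinuousLinearMap.coe_id']
  have : 0 < √(R ^ 2 - ‖y - a‖ ^ 2) := Real.sqrt_pos.mpr hs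
  field_simp
  ring

variable [CompleteSpace F]

lemma gradient_hemisphere (hy : y ∈ ball a R) :
    gradient (hemisphere a R M) y = -(√(R ^ 2 - ‖y - a‖ ^ 2))⁻¹ • (y - a) :=
  ext_inner_right ℝ fun v => by
    rw [inner_gradient_left, (hasFDerivAt_hemisphere hy).fderiv]
    simp [real_inner_smul_left, inner_sub_left]

lemma fderiv_hemisphere_div_sqrt (hy : y ∈ ball a R) (e : F) :
    fderiv ℝ (hemisphere a R M) y e / √(1 + ‖gradient (hemisphere a R M) y‖ ^ 2) =
      -⟪y - a, e⟫ / R := by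
  have hs := sq_sub_norm_sub_sq_pos_of_mem_ball hy
  have hR : 0 < R := (dist_nonneg.trans_lt hy)
  have hs0 : 0 < √(R ^ 2 - ‖y - a‖ ^ 2) := Real.sqrt_pos.mpr hs
  have hs2 : √(R ^ 2 - ‖y - a‖ ^ 2) ^ 2 = R ^ 2 - ‖y - a‖ ^ 2 := Real.sq_sqrt hs.le
  have hW : √(1 + ‖gradient (hemisphere a R M) y‖ ^ 2) = R / √(R ^ 2 - ‖y - a‖ ^ 2) := by
    rw [gradient_hemisphere hy, norm_smul, mul_pow, norm_neg, norm_inv, Real.norm_of_nonneg hs0.le,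
      ← Real.sqrt_sq (div_pos hR hs0).le]
    congr 1
    field_simp
    linarith
  rw [hW, (hasFDerivAt_hemisphere hy).fderiv]
  simp only [smul_apply, innerSL_apply_apply, smul_eq_mul]
  field_simp

end Hemisphere

section Euclidean

variable {n : ℕ}

local notation "E" => EuclideanSpace ℝ (Fin n)

lemma meanCurvOp_eq_meanCurvTrace {u : E → ℝ} {x : E} (hu : ContDiffAt ℝ 2 u x) :
    meanCurvOp n u x = meanCurvTrace (gradient u x) (fderiv ℝ (gradient u) x) /
      √(1 + ‖gradient u x‖ ^ 2) := by
  set p := gradient u x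
  set S := fderiv ℝ (gradient u) x
  set W := √(1 + ‖p‖ ^ 2)
  set b := EuclideanSpace.basisFun (Fin n) ℝ
  have hW : 0 < W := by positivity
  have hW2 : W ^ 2 = 1 + ‖p‖ ^ 2 := Real.sq_sqrt (by positivity)
  have hterm : ∀ i, fderiv ℝ (fun y => fderiv ℝ u y (b i) / √(1 + ‖gradient u y‖ ^ 2)) x (b i) =
      ⟪b i, S (b i)⟫ / W - ⟪b i, p⟫ * ⟪p, S (b i)⟫ / W ^ 3 := fun i => by
    have hcomp : (fun y => fderiv ℝ u y (b i) / √(1 + ‖gradient u y‖ ^ 2)) =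
        (fun q : E => ⟪b i, q⟫ / √(1 + ‖q‖ ^ 2)) ∘ gradient u := by
      funext y
      rw [Function.comp_apply, real_inner_comm, inner_gradient_left]
    rw [hcomp, ((hasFDerivAt_inner_div_sqrt_one_add_norm_sq (b i) p).comp x
      hu.differentiableAt_gradient.hasFDerivAt).fderiv]
    simp only [ContinuousLinearMap.comp_apply, sub_apply, smul_apply, innerSL_apply_apply,
      smul_eq_mul]
    ring
  have hb : ∀ i, EuclideanSpace.single i (1 : ℝ) = b i := fun i =>
    (EuclideanSpace.basisFun_apply (Fin n) ℝ i).symm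
  simp only [meanCurvOp, hb, hterm, Finset.sum_sub_distrib, ← Finset.sum_div,
    b.sum_inner_mul_inner_apply, meanCurvTrace, LinearMap.trace_eq_sum_inner _ b,
    ContinuousLinearMap.coe_coe]
  field_simp
  rw [hW2]
  ring

lemma meanCurvOp_le_of_isLocalMax_sub {u φ : E → ℝ} {x : E} (hu : ContDiffAt ℝ 2 u x)
    (hφ : ContDiffAt ℝ 2 φ x) (h : IsLocalMax (fun y => u y - φ y) x) :
    meanCurvOp n u x ≤ meanCurvOp n φ x := by
  have hgrad_sub : gradient (fun y => u y - φ y) =ᶠ[𝓝 x] fun y => gradient u y - gradient φ y := by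
    filter_upwards [hu.eventually (by simp), hφ.eventually (by simp)] with y huy hφy
    simp only [gradient, fderiv_fun_sub (huy.differentiableAt (by simp))
      (hφy.differentiableAt (by simp)), map_sub]
  have hgrad : gradient u x = gradient φ x := by
    have := hgrad_sub.self_of_nhds
    simp only [gradient, h.fderiv_eq_zero, map_zero] at this
    exact sub_eq_zero.mp this.symm
  have hhess : fderiv ℝ (gradient (fun y => u y - φ y)) x =
      fderiv ℝ (gradient u) x - fderiv ℝ (gradient φ) x := by
    rw [hgrad_sub.fderiv_eq, fderiv_fun_sub hu.differentiableAt_gradient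
      hφ.differentiableAt_gradient]
  have hneg := meanCurvTrace_nonpos (gradient u x)
    (hhess ▸ h.inner_fderiv_gradient_nonpos (hu.sub hφ))
  rw [meanCurvTrace_sub] at hneg
  rw [meanCurvOp_eq_meanCurvTrace hu, meanCurvOp_eq_meanCurvTrace hφ, ← hgrad]
  gcongr
  linarith

lemma meanCurvOp_hemisphere {a x : E} {R : ℝ} (M : ℝ) (hx : x ∈ ball a R) :
    meanCurvOp n (hemisphere a R M) x = -(n / R) := by
  have hterm : ∀ e : E, fderiv ℝ (fun y => fderiv ℝ (hemisphere a R M) y e /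
      √(1 + ‖gradient (hemisphere a R M) y‖ ^ 2)) x e = -⟪e, e⟫ / R := fun e => by
    have hlin : HasFDerivAt (fun y => -⟪y - a, e⟫ / R) ((-R⁻¹) • innerSL ℝ e) x := by
      have hfun : (fun y => -⟪y - a, e⟫ / R) = fun y => -R⁻¹ * innerSL ℝ e y + R⁻¹ * ⟪e, a⟫ := by
        funext y
        rw [innerSL_apply_apply, real_inner_comm, inner_sub_right]
        ring
      rw [hfun]
      exact ((innerSL ℝ e).hasFDerivAt.const_mul _).add_const _
    have hev : (fun y => fderiv ℝ (hemisphere a R M) y e /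
        √(1 + ‖gradient (hemisphere a R M) y‖ ^ 2)) =ᶠ[𝓝 x] fun y => -⟪y - a, e⟫ / R := by
      filter_upwards [isOpen_ball.mem_nhds hx] with y hy using fderiv_hemisphere_div_sqrt hy e
    rw [hev.fderiv_eq, hlin.fderiv]
    simp only [smul_apply, innerSL_apply_apply, smul_eq_mul]
    ring
  simp [meanCurvOp, hterm]
  ring

lemma meanCurvOp_neg (u : E → ℝ) (x : E) :
    meanCurvOp n (fun y => -u y) x = -meanCurvOp n u x := by
  have hgrad : gradient (fun y => -u y) = fun y => -gradient u y :=
    funext fun y => by simp [gradient, fderiv_fun_neg]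
  simp [meanCurvOp, hgrad, neg_div, fderiv_fun_neg]

lemma le_add_of_neg_div_lt_meanCurvOp {u : E → ℝ} {a : E} {R M : ℝ}
    (hu : ContinuousOn u (closedBall a R)) (hu2 : ContDiffOn ℝ 2 u (ball a R))
    (hQ : ∀ x ∈ ball a R, -(n / R) < meanCurvOp n u x) (hM : ∀ y ∈ sphere a R, u y ≤ M) :
    ∀ x ∈ closedBall a R, u x ≤ M + R := by
  intro x hx
  have hφ : Continuous (hemisphere a R M) := by unfold hemisphere; fun_prop
  obtain ⟨x₀, hx₀, hmax⟩ := (isCompact_closedBall a R).exists_isMaxOn ⟨x, hx⟩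
    (hu.sub hφ.continuousOn)
  have hx₀_nonpos : u x₀ - hemisphere a R M x₀ ≤ 0 := by
    rcases (mem_closedBall.mp hx₀).eq_or_lt with hsphere | hball
    · simp [hemisphere, ← dist_eq_norm, hsphere, hM x₀ (mem_sphere.mpr hsphere)]
    · have hball : x₀ ∈ ball a R := hball
      have := meanCurvOp_le_of_isLocalMax_sub (hu2.contDiffAt (isOpen_ball.mem_nhds hball))
        (contDiffAt_hemisphere hball) (hmax.isLocalMax
          (mem_of_superset (isOpen_ball.mem_nhds hball) ball_subset_closedBall))
      linarith [hQ x₀ hball, meanCurvOp_hemisphere M hball]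
  have hφ_le : hemisphere a R M x ≤ M + R := by
    have hR : 0 ≤ R := dist_nonneg.trans (mem_closedBall.mp hx)
    simp only [hemisphere, add_le_add_iff_left, Real.sqrt_le_iff, hR, true_and]
    nlinarith [norm_nonneg (x - a)]
  have hle : u x - hemisphere a R M x ≤ u x₀ - hemisphere a R M x₀ := hmax hx
  linarith

end Euclidean

/-- A priori `C⁰` estimate for prescribed mean curvature graphs over a round
ball `Ω = B(0, R)` in `ℝⁿ`: there is `C = C(n, R) > 0` such that every solution
of `Q[u] = nH` on `Ω` with `sup |H| ≤ (n−1)/(nR)` satisfies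
`sup_{closure Ω} |u| ≤ C + sup_{∂Ω} |u|`. -/
theorem prescribed_mean_curvature_height_estimate
    (n : ℕ) (hn : 2 ≤ n) (R : ℝ) (hR : 0 < R)
    (Ω : Set (EuclideanSpace ℝ (Fin n)))
    (hΩ : Ω = Metric.ball (0 : EuclideanSpace ℝ (Fin n)) R) :
    ∃ C : ℝ, 0 < C ∧
      ∀ (H u : EuclideanSpace ℝ (Fin n) → ℝ),
        ContinuousOn H (closure Ω) →
        (∀ x ∈ closure Ω, |H x| ≤ ((n : ℝ) - 1) / (n * R)) →
        ContinuousOn u (closure Ω) →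
        ContDiffOn ℝ 2 u Ω →
        (∀ x ∈ Ω, meanCurvOp n u x = n * H x) →
        ∀ x ∈ closure Ω,
          |u x| ≤ C + sSup ((fun y => |u y|) '' (closure Ω \ Ω)) := by
  subst hΩ
  refine ⟨R, hR, fun H u _ hH hu hu2 hQ x hx => ?_⟩
  rw [closure_ball 0 hR.ne'] at hH hu hx ⊢
  rw [closedBall_sdiff_ball]
  have hM : ∀ y ∈ sphere (0 : EuclideanSpace ℝ (Fin n)) R,
      |u y| ≤ sSup ((fun y => |u y|) '' sphere 0 R) :=
    fun y hy => le_csSup ((isCompact_sphere 0 R).image_of_continuousOn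
      (hu.mono sphere_subset_closedBall).abs).bddAbove (mem_image_of_mem _ hy)
  have hQ_lt : ∀ y ∈ ball (0 : EuclideanSpace ℝ (Fin n)) R, |meanCurvOp n u y| < n / R := by
    intro y hy
    have hn0 : (0 : ℝ) < n := Nat.cast_pos.mpr (by omega)
    calc |meanCurvOp n u y| = n * |H y| := by rw [hQ y hy, abs_mul, Nat.abs_cast]
      _ ≤ n * (((n : ℝ) - 1) / (n * R)) := by gcongr; exact hH y (ball_subset_closedBall hy)
      _ = ((n : ℝ) - 1) / R := by field_simp
      _ < n / R := by gcongr; linarith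
  have upper := le_add_of_neg_div_lt_meanCurvOp hu hu2 (fun y hy => neg_lt_of_abs_lt (hQ_lt y hy))
    (fun y hy => (le_abs_self _).trans (hM y hy)) x hx
  have lower := le_add_of_neg_div_lt_meanCurvOp (u := fun y => -u y) hu.neg hu2.neg
    (fun y hy => by rw [meanCurvOp_neg, neg_lt_neg_iff]; exact (abs_lt.mp (hQ_lt y hy)).2)
    (fun y hy => (neg_le_abs _).trans (hM y hy)) x hx
  rw [abs_le]
  constructor <;> linarith
end

section
/- Let n ≥ 1, let Ω ⊆ EuclideanSpace ℝ (Fin n) be a bounded open set, let H ∈ ℝ be a constant, and let u : EuclideanSpace ℝ (Fin n) → ℝ be three times continuously differentiable on an open set containing closure(Ω) and satisfy Σᵢ ∂ᵢ(∂ᵢu/√(1 + ‖∇u‖²)) = n·H at every point of Ω. Then sup_{closure(Ω)} ‖∇u‖ = sup_{∂Ω} ‖∇u‖; that is, the maximum of ‖∇u‖ over closure(Ω) is attained on the boundary ∂Ω. -/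
open Filter Topology Set
open scoped RealInnerProductSpace

theorem IsLocalMax.deriv_deriv_nonpos {g : ℝ → ℝ} {t : ℝ} (hmax : IsLocalMax g t)
    (hg : ContinuousAt g t) : deriv (deriv g) t ≤ 0 := by
  by_contra! hpos
  -- the second derivative test would make `t` a local minimum too, so `g` is locally constant
  have hmin : IsLocalMin g t := isLocalMin_of_deriv_deriv_pos hpos hmax.deriv_eq_zero hg
  have hconst : g =ᶠ[𝓝 t] fun _ => g t :=
    (hmin.and hmax).mono fun _ h => le_antisymm h.2 h.1
  have hderiv : deriv g =ᶠ[𝓝 t] fun _ => 0 :=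
    hconst.eventually_nhds.mono fun _ hs => by simp [EventuallyEq.deriv_eq hs]
  simp [hderiv.deriv_eq] at hpos

theorem IsCompact.exists_forall_pos_sq_mul_add_mul {X : Type*} [TopologicalSpace X] {K : Set X}
    (hK : IsCompact K) {f g : X → ℝ} (hf : ContinuousOn f K) (hg : ContinuousOn g K)
    (hpos : ∀ x ∈ K, 0 < f x) : ∃ t : ℝ, ∀ x ∈ K, 0 < t ^ 2 * f x + t * g x := by
  rcases K.eq_empty_or_nonempty with rfl | hne
  · exact ⟨0, by simp⟩
  obtain ⟨x₀, hx₀, hmin⟩ := hK.exists_isMinOn hne hf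
  obtain ⟨β, hβ⟩ := hK.exists_bound_of_continuousOn hg
  have hf₀ := hpos x₀ hx₀
  refine ⟨(|β| + 1) / f x₀, fun x hx => ?_⟩
  have ht : 0 < (|β| + 1) / f x₀ := by positivity
  have htf : |β| + 1 ≤ (|β| + 1) / f x₀ * f x := by
    rw [div_mul_eq_mul_div, le_div_iff₀ hf₀]
    exact mul_le_mul_of_nonneg_left (hmin hx) (by positivity)
  have hgx : -|β| ≤ g x := by
    have := (Real.norm_eq_abs _ ▸ hβ x hx).trans (le_abs_self β)
    linarith [neg_abs_le (g x)]
  nlinarith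

theorem Bornology.IsBounded.nonempty_frontier {E : Type*} [NormedAddCommGroup E]
    [NormedSpace ℝ E] [Nontrivial E] {s : Set E} (hs : IsBounded s) (hne : s.Nonempty) :
    (frontier s).Nonempty :=
  nonempty_frontier_iff.2 ⟨hne, fun h => NormedSpace.unbounded_univ ℝ E (h ▸ hs)⟩

section SecondOrder

variable {E : Type*} [NormedAddCommGroup E] [InnerProductSpace ℝ E] [CompleteSpace E]

theorem IsLocalMax.inner_apply_self_nonpos {v : E → ℝ} {G : E → E} {D : E →L[ℝ] E} {x : E}
    (hmax : IsLocalMax v x) (hG : ∀ᶠ y in 𝓝 x, HasGradientAt v (G y) y)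
    (hD : HasFDerivAt G D x) (h : E) : ⟪D h, h⟫ ≤ 0 := by
  set L : ℝ → E := fun t => x + t • h
  have hL0 : L 0 = x := by simp [L]
  have hL : ∀ t, HasDerivAt L h t := fun t => by
    simpa only [id, one_smul] using ((hasDerivAt_id t).smul_const h).const_add x
  rw [← hL0] at hmax hG hD
  have hderiv : deriv (v ∘ L) =ᶠ[𝓝 0] fun t => ⟪G (L t), h⟫ := by
    filter_upwards [(hL 0).continuousAt.eventually hG] with t ht
    simpa using (ht.hasFDerivAt.comp_hasDerivAt t (hL t)).deriv
  have hsecond : HasDerivAt (fun t => ⟪G (L t), h⟫) ⟪D h, h⟫ 0 :=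
    ((hD.comp_hasDerivAt 0 (hL 0)).inner ℝ (hasDerivAt_const 0 h)).congr_deriv (by simp)
  have hcont : ContinuousAt (v ∘ L) 0 :=
    hG.self_of_nhds.hasFDerivAt.continuousAt.comp (hL 0).continuousAt
  simpa [hderiv.deriv_eq, hsecond.deriv] using
    (hmax.comp_continuous (hL 0).continuousAt).deriv_deriv_nonpos hcont

theorem hasGradientAt_exp_inner (e y : E) :
    HasGradientAt (fun z => Real.exp ⟪e, z⟫) (Real.exp ⟪e, y⟫ • e) y := by
  rw [hasGradientAt_iff_hasFDerivAt, map_smul]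
  exact ((innerSL ℝ e).hasFDerivAt).exp

end SecondOrder

section MaximumPrinciple

variable {E : Type*} [NormedAddCommGroup E] [InnerProductSpace ℝ E] [FiniteDimensional ℝ E]

noncomputable def traceCLM : (E →L[ℝ] E) →L[ℝ] ℝ :=
  LinearMap.toContinuousLinearMap (LinearMap.trace ℝ E ∘ₗ ContinuousLinearMap.coeLM ℝ)

theorem traceCLM_apply (T : E →L[ℝ] E) : traceCLM T = LinearMap.trace ℝ E T := rfl

theorem traceCLM_comp_smulRight_innerSL (T : E →L[ℝ] E) (a b : E) :
    traceCLM (T ∘L (innerSL ℝ a).smulRight b) = ⟪a, T b⟫ := by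
  have : (T ∘L (innerSL ℝ a).smulRight b : E →ₗ[ℝ] E) =
      (innerSL ℝ a : E →ₗ[ℝ] ℝ).smulRight (T b) := by
    ext v; simp
  rw [traceCLM_apply, this, LinearMap.trace_smulRight]
  rfl

theorem LinearMap.IsPositive.trace_comp_nonpos {A S : E →ₗ[ℝ] E} (hA : A.IsPositive)
    (hS : ∀ x, ⟪S x, x⟫ ≤ 0) : LinearMap.trace ℝ E (A ∘ₗ S) ≤ 0 := by
  rw [LinearMap.trace_eq_sum_inner _ (hA.isSymmetric.eigenvectorBasis rfl)]
  refine Finset.sum_nonpos fun i _ => ?_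
  rw [LinearMap.comp_apply, ← hA.isSymmetric, hA.isSymmetric.apply_eigenvectorBasis,
    real_inner_smul_left, real_inner_comm]
  exact mul_nonpos_of_nonneg_of_nonpos (hA.nonneg_eigenvalues rfl i) (hS _)

theorem IsLocalMax.traceCLM_comp_add_nonpos {v : E → ℝ} {G : E → E} {D A : E →L[ℝ] E}
    {B : StrongDual ℝ E} {x : E} (hmax : IsLocalMax v x)
    (hG : ∀ᶠ y in 𝓝 x, HasGradientAt v (G y) y) (hD : HasFDerivAt G D x) (hA : A.IsPositive) :
    traceCLM (A ∘L D) + B (G x) ≤ 0 := by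
  have hGx : G x = 0 := by
    simpa using hmax.hasFDerivAt_eq_zero hG.self_of_nhds.hasFDerivAt
  rw [hGx, map_zero, add_zero]
  exact hA.toLinearMap.trace_comp_nonpos (hmax.inner_apply_self_nonpos hG hD)

theorem le_of_forall_mem_frontier_le_of_elliptic {Ω : Set E} (hΩ : Bornology.IsBounded Ω)
    {w : E → ℝ} {G : E → E} {D A : E → E →L[ℝ] E} {B : E → StrongDual ℝ E} {e : E}
    (hw : ContinuousOn w (closure Ω))
    (hG : ∀ x ∈ interior Ω, HasGradientAt w (G x) x)
    (hD : ∀ x ∈ interior Ω, HasFDerivAt G (D x) x)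
    (hA : ∀ x ∈ interior Ω, (A x).IsPositive)
    (he : ∀ x ∈ interior Ω, 0 < ⟪e, A x e⟫ + B x e)
    (hL : ∀ x ∈ interior Ω, 0 ≤ traceCLM (A x ∘L D x) + B x (G x))
    {C : ℝ} (hC : ∀ x ∈ frontier Ω, w x ≤ C) {x : E} (hx : x ∈ closure Ω) : w x ≤ C := by
  by_contra! hxC
  set γ : E → ℝ := fun y => Real.exp ⟪e, y⟫
  have hK : IsCompact (closure Ω) := hΩ.isCompact_closure
  obtain ⟨M, hM⟩ := hK.bddAbove_image (f := γ) (by fun_prop)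
  have hMpos : 0 < M := (Real.exp_pos _).trans_le (hM ⟨x, hx, rfl⟩)
  set ε := (w x - C) / (2 * M)
  have hε : 0 < ε := div_pos (sub_pos.2 hxC) (by positivity)
  set v : E → ℝ := fun y => w y + ε * γ y
  obtain ⟨x₀, hx₀, hmax⟩ := hK.exists_isMaxOn ⟨x, hx⟩ (f := v) (hw.add (by fun_prop))
  have hx₀Ω : x₀ ∈ interior Ω := by
    -- otherwise `v x₀ ≤ C + ε M < w x < v x`
    by_contra hx₀'
    have hεM : ε * M = (w x - C) / 2 := by simp only [ε]; field_simp
    have hvx : w x + ε * γ x ≤ w x₀ + ε * γ x₀ := hmax hx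
    have := mul_le_mul_of_nonneg_left (hM ⟨x₀, hx₀, rfl⟩) hε.le
    have := mul_pos hε (Real.exp_pos ⟪e, x⟫)
    linarith [hC x₀ ⟨hx₀, hx₀'⟩]
  have hnhds : interior Ω ∈ 𝓝 x₀ := isOpen_interior.mem_nhds hx₀Ω
  set R : E →L[ℝ] E := (innerSL ℝ e).smulRight e
  have hvG : ∀ y ∈ interior Ω, HasGradientAt v (G y + (ε * γ y) • e) y := fun y hy => by
    rw [hasGradientAt_iff_hasFDerivAt, map_add, mul_smul, map_smul]
    exact (hG y hy).hasFDerivAt.add ((hasGradientAt_exp_inner e y).hasFDerivAt.const_mul ε)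
  have hvD : HasFDerivAt (fun y => G y + (ε * γ y) • e) (D x₀ + (ε * γ x₀) • R) x₀ := by
    refine (hD x₀ hx₀Ω).add <|
      (((hasGradientAt_exp_inner e x₀).hasFDerivAt.const_mul ε).smul_const e).congr_fderiv ?_
    ext h
    simp [R, γ, smul_smul, mul_assoc]
  have hLv := (hmax.isLocalMax (mem_of_superset hnhds interior_subset_closure)
    ).traceCLM_comp_add_nonpos (B := B x₀) (eventually_of_mem hnhds hvG) hvD (hA x₀ hx₀Ω)
  rw [ContinuousLinearMap.comp_add, ContinuousLinearMap.comp_smul, map_add, map_smul,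
    traceCLM_comp_smulRight_innerSL, map_add, map_smul, smul_eq_mul, smul_eq_mul] at hLv
  nlinarith [hL x₀ hx₀Ω, he x₀ hx₀Ω, mul_pos hε (Real.exp_pos ⟪e, x₀⟫)]

end MaximumPrinciple

section MeanCurvature

variable {E : Type*} [NormedAddCommGroup E] [InnerProductSpace ℝ E]

noncomputable def meanCurvFlux (p : E) : E := (√(1 + ‖p‖ ^ 2))⁻¹ • p

theorem contDiff_meanCurvFlux {n : WithTop ℕ∞} : ContDiff ℝ n (meanCurvFlux (E := E)) := by
  have hpos : ∀ p : E, 0 < √(1 + ‖p‖ ^ 2) := fun p => Real.sqrt_pos.2 (by positivity)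
  exact (((contDiff_const.add (contDiff_norm_sq ℝ)).sqrt fun p => by positivity).inv
    fun p => (hpos p).ne').smul contDiff_id

theorem fderiv_meanCurvFlux_apply (p v : E) :
    fderiv ℝ meanCurvFlux p v =
      (√(1 + ‖p‖ ^ 2))⁻¹ • v - ((√(1 + ‖p‖ ^ 2))⁻¹ ^ 3 * ⟪p, v⟫) • p := by
  have hs : (0 : ℝ) < 1 + ‖p‖ ^ 2 := by positivity
  have hW : HasFDerivAt (fun q : E => √(1 + ‖q‖ ^ 2))
      ((1 / (2 * √(1 + ‖p‖ ^ 2))) • (2 • innerSL ℝ p)) p :=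
    ((hasStrictFDerivAt_id p).hasFDerivAt.norm_sq.const_add 1).sqrt hs.ne'
  have hF : HasFDerivAt (meanCurvFlux (E := E)) _ p :=
    ((hasDerivAt_inv (Real.sqrt_pos.2 hs).ne').comp_hasFDerivAt p hW).smul (hasFDerivAt_id p)
  rw [hF.fderiv]
  simp
  module

theorem inner_fderiv_meanCurvFlux (p v w : E) :
    ⟪fderiv ℝ meanCurvFlux p v, w⟫ =
      (√(1 + ‖p‖ ^ 2))⁻¹ * ⟪v, w⟫ - (√(1 + ‖p‖ ^ 2))⁻¹ ^ 3 * (⟪p, v⟫ * ⟪p, w⟫) := by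
  rw [fderiv_meanCurvFlux_apply, inner_sub_left, real_inner_smul_left, real_inner_smul_left,
    mul_assoc]

theorem norm_sq_div_le_inner_fderiv_meanCurvFlux (p v : E) :
    ‖v‖ ^ 2 / √(1 + ‖p‖ ^ 2) ^ 3 ≤ ⟪fderiv ℝ meanCurvFlux p v, v⟫ := by
  have hs : (0 : ℝ) < 1 + ‖p‖ ^ 2 := by positivity
  have hW : 0 < √(1 + ‖p‖ ^ 2) := Real.sqrt_pos.2 hs
  have hW2 : √(1 + ‖p‖ ^ 2) ^ 2 = 1 + ‖p‖ ^ 2 := Real.sq_sqrt hs.le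
  have hCS : ⟪p, v⟫ ^ 2 ≤ ‖p‖ ^ 2 * ‖v‖ ^ 2 := by
    rw [← mul_pow]
    exact sq_le_sq' (abs_le.1 (abs_real_inner_le_norm p v)).1 (real_inner_le_norm p v)
  have key : ⟪fderiv ℝ meanCurvFlux p v, v⟫ - ‖v‖ ^ 2 / √(1 + ‖p‖ ^ 2) ^ 3 =
      (‖p‖ ^ 2 * ‖v‖ ^ 2 - ⟪p, v⟫ ^ 2) / √(1 + ‖p‖ ^ 2) ^ 3 := by
    rw [inner_fderiv_meanCurvFlux, real_inner_self_eq_norm_sq]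
    field_simp
    linear_combination ‖v‖ ^ 2 * hW2
  have : 0 ≤ (‖p‖ ^ 2 * ‖v‖ ^ 2 - ⟪p, v⟫ ^ 2) / √(1 + ‖p‖ ^ 2) ^ 3 :=
    div_nonneg (sub_nonneg.2 hCS) (by positivity)
  linarith

theorem isPositive_fderiv_meanCurvFlux (p : E) : (fderiv ℝ meanCurvFlux p).IsPositive := by
  refine ⟨fun v w => ?_, fun v => ?_⟩
  · change ⟪fderiv ℝ meanCurvFlux p v, w⟫ = ⟪v, fderiv ℝ meanCurvFlux p w⟫
    rw [real_inner_comm (fderiv ℝ meanCurvFlux p w), inner_fderiv_meanCurvFlux,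
      inner_fderiv_meanCurvFlux, real_inner_comm w v]
    ring
  · exact (by positivity : (0:ℝ) ≤ _).trans (norm_sq_div_le_inner_fderiv_meanCurvFlux p v)

variable [FiniteDimensional ℝ E]

theorem ContDiffAt.gradient {u : E → ℝ} {x : E} {m n : WithTop ℕ∞} (hu : ContDiffAt ℝ n u x)
    (hmn : m + 1 ≤ n) : ContDiffAt ℝ m (gradient u) x :=
  (InnerProductSpace.toDual ℝ E).symm.contDiff.contDiffAt.comp x (hu.fderiv_right hmn)

theorem ContDiffOn.gradient_of_isOpen {u : E → ℝ} {U : Set E} {m n : WithTop ℕ∞}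
    (hu : ContDiffOn ℝ n u U) (hU : IsOpen U) (hmn : m + 1 ≤ n) :
    ContDiffOn ℝ m (gradient u) U :=
  (InnerProductSpace.toDual ℝ E).symm.contDiff.comp_contDiffOn (hu.fderiv_of_isOpen hU hmn)

theorem hasGradientAt_inner_gradient {u : E → ℝ} {x : E} (hu : ContDiffAt ℝ 2 u x) (v : E) :
    HasGradientAt (fun y => ⟪gradient u y, v⟫) (fderiv ℝ (gradient u) x v) x := by
  have hsymm := hu.isSymmSndFDerivAt (by simp)
  set J : StrongDual ℝ E →L[ℝ] E :=
    (InnerProductSpace.toDual ℝ E).symm.toContinuousLinearEquiv.toContinuousLinearMap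
  have hD2 : HasFDerivAt (fderiv ℝ u) (fderiv ℝ (fderiv ℝ u) x) x :=
    ((hu.fderiv_right (m := 1) le_rfl).differentiableAt one_ne_zero).hasFDerivAt
  have hgrad : HasFDerivAt (gradient u) (J ∘L fderiv ℝ (fderiv ℝ u) x) x :=
    J.hasFDerivAt.comp x hD2
  rw [hasGradientAt_iff_hasFDerivAt]
  refine (hgrad.inner ℝ (hasFDerivAt_const v x)).congr_fderiv ?_
  ext h
  simp [hgrad.fderiv, J, InnerProductSpace.toDual_symm_apply, hsymm h v]

theorem traceCLM_fderiv_apply_eq_zero {Φ : E → E} {x : E} {c : ℝ} (hΦ : ContDiffAt ℝ 2 Φ x)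
    (hc : ∀ᶠ y in 𝓝 x, traceCLM (fderiv ℝ Φ y) = c) (e : E) :
    traceCLM (fderiv ℝ (fun y => fderiv ℝ Φ y e) x) = 0 := by
  have hΦ' : HasFDerivAt (fderiv ℝ Φ) (fderiv ℝ (fderiv ℝ Φ) x) x :=
    ((hΦ.fderiv_right (m := 1) le_rfl).differentiableAt one_ne_zero).hasFDerivAt
  have hsymm := hΦ.isSymmSndFDerivAt (by simp)
  have happly : fderiv ℝ (fun y => fderiv ℝ Φ y e) x = fderiv ℝ (fderiv ℝ Φ) x e := by
    ext1 v
    rw [fderiv_clm_apply hΦ'.differentiableAt (differentiableAt_const e)]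
    simp [hsymm v e]
  have htrace : traceCLM ∘L fderiv ℝ (fderiv ℝ Φ) x = 0 := by
    rw [← (traceCLM.hasFDerivAt.comp x hΦ').fderiv]
    exact (EventuallyEq.fderiv_eq (f := fun _ => c) hc).trans (fderiv_const_apply c)
  simpa [happly] using congr($htrace e)

/-- With `A = meanCurvPrincipalCoeff u` and `B = meanCurvFirstOrderCoeff u`, the linearization of
`div (meanCurvFlux ∘ ∇u)` at `u` is `w ↦ tr (A ∘ D²w) + B ∇w`. -/
noncomputable def meanCurvPrincipalCoeff (u : E → ℝ) (x : E) : E →L[ℝ] E :=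
  fderiv ℝ meanCurvFlux (gradient u x)

noncomputable def meanCurvFirstOrderCoeff (u : E → ℝ) (x : E) : StrongDual ℝ E :=
  traceCLM ∘L (fderiv ℝ (meanCurvPrincipalCoeff u) x).flip

theorem meanCurvPrincipalCoeff_comp_add_firstOrderCoeff_eq_zero {u : E → ℝ} {x : E} {c : ℝ}
    (hu : ContDiffAt ℝ 3 u x)
    (hc : ∀ᶠ y in 𝓝 x, traceCLM (fderiv ℝ (meanCurvFlux ∘ gradient u) y) = c) (e : E) :
    traceCLM (meanCurvPrincipalCoeff u x ∘L fderiv ℝ (fun y => fderiv ℝ (gradient u) y e) x) +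
      meanCurvFirstOrderCoeff u x (fderiv ℝ (gradient u) x e) = 0 := by
  have hgrad : ContDiffAt ℝ 2 (gradient u) x := hu.gradient (by norm_num)
  have hA : DifferentiableAt ℝ (meanCurvPrincipalCoeff u) x :=
    ((contDiff_meanCurvFlux.fderiv_right (m := 1) le_rfl).contDiffAt.comp x
      (hgrad.of_le (by norm_num))).differentiableAt one_ne_zero
  have hΨ : DifferentiableAt ℝ (fun y => fderiv ℝ (gradient u) y e) x :=
    ((hgrad.fderiv_right (m := 1) le_rfl).differentiableAt one_ne_zero).clm_apply
      (differentiableAt_const e)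
  have hchain : (fun y => fderiv ℝ (meanCurvFlux ∘ gradient u) y e) =ᶠ[𝓝 x]
      fun y => meanCurvPrincipalCoeff u y (fderiv ℝ (gradient u) y e) := by
    filter_upwards [hgrad.eventually (by simp)] with y hy
    rw [fderiv_comp y ((contDiff_meanCurvFlux (n := 1)).differentiable one_ne_zero _)
      (hy.differentiableAt two_ne_zero)]
    rfl
  have := traceCLM_fderiv_apply_eq_zero (contDiff_meanCurvFlux.contDiffAt.comp x hgrad) hc e
  rwa [hchain.fderiv_eq, fderiv_clm_apply hA hΨ, map_add] at this

end MeanCurvature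

section GradientMaximumPrinciple

variable {E : Type*} [NormedAddCommGroup E] [InnerProductSpace ℝ E] [FiniteDimensional ℝ E]
  [Nontrivial E] {Ω U : Set E} {u : E → ℝ} {c C : ℝ} {x : E}

theorem inner_gradient_le_of_forall_mem_frontier (hΩ : Bornology.IsBounded Ω) (hU : IsOpen U)
    (hΩU : closure Ω ⊆ U) (hu : ContDiffOn ℝ 3 u U)
    (hH : ∀ y ∈ interior Ω, traceCLM (fderiv ℝ (meanCurvFlux ∘ gradient u) y) = c) (v : E)
    (hC : ∀ y ∈ frontier Ω, ⟪gradient u y, v⟫ ≤ C) (hx : x ∈ closure Ω) :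
    ⟪gradient u x, v⟫ ≤ C := by
  have hu' : ∀ y ∈ interior Ω, ContDiffAt ℝ 3 u y := fun y hy =>
    hu.contDiffAt (hU.mem_nhds (hΩU (interior_subset_closure hy)))
  have hgrad : ContDiffOn ℝ 2 (gradient u) U := hu.gradient_of_isOpen hU (by norm_num)
  have hA : ContDiffOn ℝ 1 (meanCurvPrincipalCoeff u) U :=
    (contDiff_meanCurvFlux.fderiv_right (m := 1) le_rfl).comp_contDiffOn (hgrad.of_le (by norm_num))
  obtain ⟨e, he⟩ := exists_ne (0 : E)
  have hB : ContinuousOn (fun y => meanCurvFirstOrderCoeff u y e) U :=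
    traceCLM.continuous.comp_continuousOn
      (((ContinuousLinearMap.flipₗᵢ ℝ E E E).continuous.comp_continuousOn
        (hA.continuousOn_fderiv_of_isOpen hU le_rfl)).clm_apply continuousOn_const)
  obtain ⟨t, ht⟩ := hΩ.isCompact_closure.exists_forall_pos_sq_mul_add_mul
    (f := fun y => ⟪e, meanCurvPrincipalCoeff u y e⟫) (g := fun y => meanCurvFirstOrderCoeff u y e)
    ((continuousOn_const.inner (hA.continuousOn.clm_apply continuousOn_const)).mono hΩU)
    (hB.mono hΩU)
    fun y _ => by
      rw [real_inner_comm]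
      exact lt_of_lt_of_le (by positivity) (norm_sq_div_le_inner_fderiv_meanCurvFlux _ e)
  refine le_of_forall_mem_frontier_le_of_elliptic hΩ (A := meanCurvPrincipalCoeff u)
    (B := meanCurvFirstOrderCoeff u) (e := t • e)
    ((hgrad.continuousOn.mono hΩU).inner continuousOn_const)
    (fun y hy => hasGradientAt_inner_gradient ((hu' y hy).of_le (by norm_num)) v)
    (fun y hy => (((hu' y hy).gradient (m := 2) (by norm_num)).fderiv_right (m := 1) le_rfl
      |>.differentiableAt one_ne_zero |>.clm_apply (differentiableAt_const v)).hasFDerivAt)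
    (fun y _ => isPositive_fderiv_meanCurvFlux _)
    (fun y hy => ?_)
    (fun y hy => (meanCurvPrincipalCoeff_comp_add_firstOrderCoeff_eq_zero (hu' y hy)
      (eventually_of_mem (isOpen_interior.mem_nhds hy) hH) v).ge)
    hC hx
  have := ht y (interior_subset_closure hy)
  simp only [map_smul, real_inner_smul_left, real_inner_smul_right, smul_eq_mul]
  linarith

theorem norm_gradient_le_of_forall_mem_frontier (hΩ : Bornology.IsBounded Ω) (hU : IsOpen U)
    (hΩU : closure Ω ⊆ U) (hu : ContDiffOn ℝ 3 u U)
    (hH : ∀ y ∈ interior Ω, traceCLM (fderiv ℝ (meanCurvFlux ∘ gradient u) y) = c)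
    (hC : ∀ y ∈ frontier Ω, ‖gradient u y‖ ≤ C) (hx : x ∈ closure Ω) :
    ‖gradient u x‖ ≤ C := by
  obtain ⟨y, hy⟩ := hΩ.nonempty_frontier (closure_nonempty_iff.1 ⟨x, hx⟩)
  have hC₀ : 0 ≤ C := (norm_nonneg _).trans (hC y hy)
  have := inner_gradient_le_of_forall_mem_frontier hΩ hU hΩU hu hH (gradient u x)
    (fun y hy => (real_inner_le_norm _ _).trans
      (mul_le_mul_of_nonneg_right (hC y hy) (norm_nonneg _))) hx
  rw [real_inner_self_eq_norm_sq] at this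
  nlinarith [norm_nonneg (gradient u x)]

end GradientMaximumPrinciple

theorem meanCurvOp_eq_traceCLM {n : ℕ} {u : EuclideanSpace ℝ (Fin n) → ℝ}
    {x : EuclideanSpace ℝ (Fin n)} (hΦ : DifferentiableAt ℝ (meanCurvFlux ∘ gradient u) x) :
    meanCurvOp n u x = traceCLM (fderiv ℝ (meanCurvFlux ∘ gradient u) x) := by
  rw [traceCLM_apply, LinearMap.trace_eq_sum_inner _ (EuclideanSpace.basisFun (Fin n) ℝ)]
  refine Finset.sum_congr rfl fun i _ => ?_
  have hcomp : (fun y => fderiv ℝ u y (EuclideanSpace.single i 1) / √(1 + ‖gradient u y‖ ^ 2)) =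
      innerSL ℝ (EuclideanSpace.single i 1) ∘ meanCurvFlux ∘ gradient u := by
    ext y
    rw [Function.comp_apply, Function.comp_apply, meanCurvFlux, innerSL_apply_apply,
      real_inner_smul_right, real_inner_comm, inner_gradient_left, div_eq_inv_mul]
  rw [hcomp, ((innerSL ℝ _).hasFDerivAt.comp x hΦ.hasFDerivAt).fderiv]
  simp

/-- Gradient maximum principle in the constant mean curvature case: if `u` is
`C³` on an open set containing `closure Ω` and solves `Q[u] = nH` on the
bounded open set `Ω` for a constant `H`, then the supremum of `‖∇u‖` over
`closure Ω` equals its supremum over the boundary `∂Ω = closure Ω \ Ω`. -/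
theorem cmc_gradient_maximum_principle
    (n : ℕ) (hn : 1 ≤ n) (Ω : Set (EuclideanSpace ℝ (Fin n)))
    (hΩopen : IsOpen Ω) (hΩbd : Bornology.IsBounded Ω)
    (H : ℝ) (u : EuclideanSpace ℝ (Fin n) → ℝ)
    (hu : ∃ U : Set (EuclideanSpace ℝ (Fin n)),
      IsOpen U ∧ closure Ω ⊆ U ∧ ContDiffOn ℝ 3 u U)
    (heq : ∀ x ∈ Ω, meanCurvOp n u x = n * H) :
    sSup ((fun x => ‖gradient u x‖) '' closure Ω) =
      sSup ((fun x => ‖gradient u x‖) '' (closure Ω \ Ω)) := by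
  obtain ⟨U, hU, hΩU, hu⟩ := hu
  have : NeZero n := ⟨by omega⟩
  have hH : ∀ y ∈ interior Ω, traceCLM (fderiv ℝ (meanCurvFlux ∘ gradient u) y) = n * H := by
    rw [hΩopen.interior_eq]
    intro y hy
    rw [← meanCurvOp_eq_traceCLM, heq y hy]
    exact (contDiff_meanCurvFlux.comp_contDiffOn (hu.gradient_of_isOpen hU (m := 1) (by norm_num))
      |>.contDiffAt (hU.mem_nhds (hΩU (subset_closure hy)))).differentiableAt one_ne_zero
  have hbdd : BddAbove ((fun x => ‖gradient u x‖) '' closure Ω) :=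
    (hΩbd.isCompact_closure.image_of_continuousOn
      ((hu.gradient_of_isOpen hU (m := 0) (by norm_num)).continuousOn.mono hΩU).norm).bddAbove
  rw [← hΩopen.frontier_eq]
  apply le_antisymm
  · refine Real.sSup_le (forall_mem_image.2 fun x hx => ?_)
      (Real.sSup_nonneg (forall_mem_image.2 fun _ _ => norm_nonneg _))
    exact norm_gradient_le_of_forall_mem_frontier hΩbd hU hΩU hu hH
      (fun y hy => le_csSup (hbdd.mono (image_mono frontier_subset_closure)) ⟨y, hy, rfl⟩) hx
  · exact Real.sSup_le
      (forall_mem_image.2 fun x hx => le_csSup hbdd ⟨x, frontier_subset_closure hx, rfl⟩)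
      (Real.sSup_nonneg (forall_mem_image.2 fun _ _ => norm_nonneg _))
end
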